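/- Let f be a complex-valued harmonic mapping of the unit disk U into itself with f(0) = 0. Then for every z ∈ U, |f(z)| ≤ (4/π) arctan |z|. -/

import Mathlib

open Metric Complex

lemma nsq_cos (w : ℂ) : normSq (Complex.cos w) = Real.cos w.re ^ 2 + Real.sinh w.im ^ 2 := by
  rw [Complex.cos_eq]
  have h : Complex.cos w.re * Complex.cosh w.im - Complex.sin w.re * Complex.sinh w.im * I
      = ((Real.cos w.re * Real.cosh w.im : ℝ) : ℂ) + ((-(Real.sin w.re * Real.sinh w.im) : ℝ) : ℂ) * I := by
    push_cast; ring
  rw [h, normSq_add_mul_I]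
  nlinarith [Real.sin_sq_add_cos_sq w.re, Real.cosh_sq w.im]

lemma nsq_sin (w : ℂ) : normSq (Complex.sin w) = Real.sin w.re ^ 2 + Real.sinh w.im ^ 2 := by
  rw [Complex.sin_eq]
  have h : Complex.sin w.re * Complex.cosh w.im + Complex.cos w.re * Complex.sinh w.im * I
      = ((Real.sin w.re * Real.cosh w.im : ℝ) : ℂ) + ((Real.cos w.re * Real.sinh w.im : ℝ) : ℂ) * I := by
    push_cast; ring
  rw [h, normSq_add_mul_I]
  nlinarith [Real.sin_sq_add_cos_sq w.re, Real.cosh_sq w.im]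

lemma cos_ne_zero_of_re (w : ℂ) (hw : |w.re| < Real.pi / 2) : Complex.cos w ≠ 0 := by
  have h1 : 0 < Real.cos w.re := Real.cos_pos_of_mem_Ioo ⟨by linarith [abs_lt.1 hw |>.1], abs_lt.1 hw |>.2⟩
  intro h
  have := nsq_cos w
  rw [h, map_zero] at this
  nlinarith [sq_nonneg (Real.sinh w.im)]

lemma abs_tan_lt_one (w : ℂ) (hw : |w.re| < Real.pi / 4) : ‖Complex.tan w‖ < 1 := by
  have hpi := Real.pi_pos
  have hw2 : |w.re| < Real.pi / 2 := by linarith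
  have hc := cos_ne_zero_of_re w hw2
  have hcpos : 0 < Real.cos w.re := Real.cos_pos_of_mem_Ioo ⟨by linarith [abs_lt.1 hw2 |>.1], abs_lt.1 hw2 |>.2⟩
  have hsincos : Real.sin w.re ^ 2 < Real.cos w.re ^ 2 := by
    have h2 : Real.cos (2 * w.re) > 0 :=
      Real.cos_pos_of_mem_Ioo ⟨by linarith [abs_lt.1 hw |>.1], by linarith [abs_lt.1 hw |>.2]⟩
    nlinarith [Real.cos_two_mul' w.re]
  have hnlt : normSq (Complex.sin w) < normSq (Complex.cos w) := by
    rw [nsq_sin, nsq_cos]; linarith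
  rw [Complex.tan_eq_sin_div_cos, norm_div]
  have habs : ‖Complex.sin w‖ < ‖Complex.cos w‖ := by
    have h1 : ‖Complex.sin w‖ ^ 2 < ‖Complex.cos w‖ ^ 2 := by
      rw [Complex.sq_norm, Complex.sq_norm]; exact hnlt
    nlinarith [norm_nonneg (Complex.sin w), norm_nonneg (Complex.cos w)]
  rw [div_lt_one (lt_of_le_of_lt (norm_nonneg _) habs)]
  exact habs

lemma tan_re_le_abs_tan (w : ℂ) (h0 : 0 ≤ w.re) (hw : w.re < Real.pi / 4) :
    Real.tan w.re ≤ ‖Complex.tan w‖ := by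
  have hpi := Real.pi_pos
  have hcpos : 0 < Real.cos w.re := Real.cos_pos_of_mem_Ioo ⟨by linarith, by linarith⟩
  have hs0 : 0 ≤ Real.sin w.re := Real.sin_nonneg_of_nonneg_of_le_pi h0 (by linarith)
  have hsc : Real.sin w.re ^ 2 ≤ Real.cos w.re ^ 2 := by
    have h2 : Real.cos (2 * w.re) ≥ 0 :=
      Real.cos_nonneg_of_mem_Icc ⟨by linarith, by linarith⟩
    nlinarith [Real.cos_two_mul' w.re]
  have hcC : 0 < ‖Complex.cos w‖ := by
    have := cos_ne_zero_of_re w (by rw [_root_.abs_of_nonneg h0]; linarith)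
    exact norm_pos_iff.mpr this
  -- squared inequality
  have key : Real.tan w.re ^ 2 ≤ ‖Complex.tan w‖ ^ 2 := by
    rw [Complex.tan_eq_sin_div_cos, norm_div, div_pow, Complex.sq_norm, Complex.sq_norm,
      nsq_sin, nsq_cos, Real.tan_eq_sin_div_cos, div_pow]
    rw [div_le_div_iff₀ (by positivity) (by positivity)]
    nlinarith [sq_nonneg (Real.sinh w.im)]
  have htn : 0 ≤ Real.tan w.re := Real.tan_nonneg_of_nonneg_of_le_pi_div_two h0 (by linarith)
  nlinarith [norm_nonneg (Complex.tan w)]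

theorem heinz_schwarz_harmonic (f h g : ℂ → ℂ)
    (hh : DifferentiableOn ℂ h (ball 0 1))
    (hg : DifferentiableOn ℂ g (ball 0 1))
    (hfhg : ∀ z ∈ ball (0:ℂ) 1, f z = h z + (starRingEnd ℂ) (g z))
    (hb : ∀ z ∈ ball (0:ℂ) 1, ‖f z‖ < 1)
    (hf0 : f 0 = 0)
    (z : ℂ) (hz : z ∈ ball (0:ℂ) 1) :
    ‖f z‖ ≤ (4 / Real.pi) * Real.arctan (‖z‖) := by
  have hpi := Real.pi_pos
  by_cases hfz : f z = 0
  · rw [hfz, norm_zero]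
    have h1 : 0 ≤ Real.arctan (‖z‖) := by
      rw [← Real.arctan_zero]
      exact Real.arctan_strictMono.monotone (norm_nonneg z)
    positivity
  · set r := ‖f z‖ with hr
    have hr0 : 0 < r := norm_pos_iff.mpr hfz
    have hr1 : r < 1 := hb z hz
    set c : ℂ := (starRingEnd ℂ) (f z) / (r : ℂ) with hc
    have hcabs : ‖c‖ = 1 := by
      rw [hc, norm_div, Complex.norm_conj, Complex.norm_real, Real.norm_eq_abs, _root_.abs_of_pos hr0, ← hr,
        div_self hr0.ne']
    have h0mem : (0 : ℂ) ∈ ball (0 : ℂ) 1 := mem_ball_self one_pos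
    -- the holomorphic function F with Re F = Re (c * f)
    set K : ℂ := c * h 0 + (starRingEnd ℂ) c * g 0 with hK
    set F : ℂ → ℂ := fun ζ => c * h ζ + (starRingEnd ℂ) c * g ζ - K with hF
    have hre : ∀ ζ ∈ ball (0:ℂ) 1, (c * h ζ + (starRingEnd ℂ) c * g ζ).re = (c * f ζ).re := by
      intro ζ hζ
      rw [hfhg ζ hζ]
      simp [Complex.mul_re, Complex.add_re, Complex.add_im, Complex.conj_re, Complex.conj_im]
      ring
    have hK0 : K.re = 0 := by
      have := hre 0 h0mem
      rw [hf0, mul_zero, Complex.zero_re] at this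
      rw [hK]; exact this
    have hFre : ∀ ζ ∈ ball (0:ℂ) 1, (F ζ).re = (c * f ζ).re := by
      intro ζ hζ
      rw [hF]; simp only [Complex.sub_re, hK0, sub_zero]
      exact hre ζ hζ
    have hFlt : ∀ ζ ∈ ball (0:ℂ) 1, |(F ζ).re| < 1 := by
      intro ζ hζ
      rw [hFre ζ hζ]
      calc |(c * f ζ).re| ≤ ‖c * f ζ‖ := Complex.abs_re_le_norm _
        _ = ‖f ζ‖ := by rw [norm_mul, hcabs, one_mul]
        _ < 1 := hb ζ hζ
    have hFdiff : DifferentiableOn ℂ F (ball 0 1) := by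
      exact ((hh.const_mul c).add (hg.const_mul _)).sub (differentiableOn_const K)
    have hF0 : F 0 = 0 := by
      show c * h 0 + (starRingEnd ℂ) c * g 0 - K = 0
      rw [hK, sub_self]
    -- W and G
    set W : ℂ → ℂ := fun ζ => ((Real.pi / 4 : ℝ) : ℂ) * F ζ with hW
    have hWre : ∀ ζ, (W ζ).re = Real.pi / 4 * (F ζ).re := fun ζ => Complex.re_ofReal_mul _ _
    have hWlt : ∀ ζ ∈ ball (0:ℂ) 1, |(W ζ).re| < Real.pi / 4 := by
      intro ζ hζ
      rw [hWre, abs_mul, _root_.abs_of_pos (by positivity : (0:ℝ) < Real.pi / 4)]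
      nlinarith [hFlt ζ hζ, abs_nonneg (F ζ).re]
    set G : ℂ → ℂ := fun ζ => Complex.tan (W ζ) with hG
    have hGdiff : DifferentiableOn ℂ G (ball 0 1) := by
      intro ζ hζ
      have hcne : Complex.cos (W ζ) ≠ 0 :=
        cos_ne_zero_of_re _ (lt_trans (hWlt ζ hζ) (by linarith))
      exact (Complex.differentiableAt_tan.2 hcne).comp_differentiableWithinAt ζ
        (((hFdiff ζ hζ).const_mul _))
    have hGmaps : Set.MapsTo G (ball 0 1) (ball 0 1) := by
      intro ζ hζ
      rw [mem_ball_zero_iff]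
      exact abs_tan_lt_one _ (hWlt ζ hζ)
    have hG0 : G 0 = 0 := by
      show Complex.tan (((Real.pi / 4 : ℝ) : ℂ) * F 0) = 0
      rw [hF0, mul_zero, Complex.tan_zero]
    -- Schwarz
    have hSchwarz : ‖G z‖ ≤ ‖z‖ :=
      Complex.norm_le_norm_of_mapsTo_ball hGdiff (hGmaps.mono_right ball_subset_closedBall) hG0 (mem_ball_zero_iff.1 hz)
    -- Re (W z) = π/4 * r
    have hcfz : c * f z = (r : ℂ) := by
      have hrne : (r:ℂ) ≠ 0 := by exact_mod_cast hr0.ne'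
      rw [hc, div_mul_eq_mul_div, mul_comm, Complex.mul_conj, Complex.normSq_eq_norm_sq, ← hr,
        pow_two, Complex.ofReal_mul, mul_div_assoc, div_self hrne, mul_one]
    have hWz : (W z).re = Real.pi / 4 * r := by
      rw [hWre, hFre z hz, hcfz, Complex.ofReal_re]
    have htan : Real.tan ((W z).re) ≤ ‖G z‖ := by
      apply tan_re_le_abs_tan
      · rw [hWz]; positivity
      · rw [hWz]; nlinarith
    have harctan : (W z).re ≤ Real.arctan (‖z‖) := by
      have h1 : Real.arctan (Real.tan ((W z).re)) = (W z).re := by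
        apply Real.arctan_tan <;> rw [hWz] <;> nlinarith
      rw [← h1]
      exact Real.arctan_strictMono.monotone (le_trans htan hSchwarz)
    rw [hWz] at harctan
    calc ‖f z‖ = 4 / Real.pi * (Real.pi / 4 * r) := by rw [← hr]; field_simp
      _ ≤ 4 / Real.pi * Real.arctan (‖z‖) :=
        mul_le_mul_of_nonneg_left harctan (by positivity)
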